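/- Let (R, 𝔪) be a noetherian local ring of dimension d ≥ 2 and I an 𝔪-primary ideal. If I^{q+1} ⊆ (I^{[q]})^* for infinitely many powers q = p^n, then e(I, R)/d! ≥ e_HK(I, R). (In particular, since l(R/(I^{[q]})^*)/q^d → e_HK(I,R), the inclusion forces l(R/I^{q+1})/q^d ≥ l(R/(I^{[q]})^*)/q^d for those q.) -/

import Mathlib

open Filter

/-- The `q`-th Frobenius power of an ideal. -/
def frobPow {R : Type*} [CommRing R] (J : Ideal R) (q : ℕ) : Ideal R :=
  Ideal.span ((fun x => x ^ q) '' (J : Set R))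

/-- The tight closure of an ideal `A` in a ring of characteristic `p`. -/
def tightClosure {R : Type*} [CommRing R] (p : ℕ) (A : Ideal R) : Ideal R :=
  Ideal.span {x : R | ∃ c : R, (∀ P ∈ minimalPrimes R, c ∉ P) ∧
    ∀ᶠ e in atTop, c * x ^ p ^ e ∈ frobPow A (p ^ e)}

/-- The length of a module, as the Krull dimension of its submodule lattice. -/
noncomputable def mLength (R M : Type*) [CommRing R] [AddCommGroup M] [Module R M] :
    WithBot ℕ∞ :=
  Order.krullDim (Submodule R M)

/-- The length as a natural number. -/
noncomputable def natLength (R M : Type*) [CommRing R] [AddCommGroup M] [Module R M] : ℕ :=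
  (WithBot.unbotD 0 (mLength R M)).toNat

section Aux

/-- Chains in a simple order have length at most one. -/
lemma ltSeries_length_le_one_of_isSimpleOrder {α : Type*} [PartialOrder α] [BoundedOrder α]
    [IsSimpleOrder α] (p : LTSeries α) : p.length ≤ 1 := by
  by_contra h
  push_neg at h
  have h0 : p.toFun ⟨0, by omega⟩ < p.toFun ⟨1, by omega⟩ :=
    p.strictMono (Fin.mk_lt_mk.mpr (by omega))
  have h1 : p.toFun ⟨1, by omega⟩ < p.toFun ⟨2, by omega⟩ :=
    p.strictMono (Fin.mk_lt_mk.mpr (by omega))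
  rcases IsSimpleOrder.eq_bot_or_eq_top (p.toFun ⟨1, by omega⟩) with h2 | h2
  · rw [h2] at h0; exact not_lt_bot h0
  · rw [h2] at h1; exact not_top_lt h1

/-- A chain in a product of partial orders can be split. -/
lemma ltSeries_prod_exists {A B : Type*} [PartialOrder A] [PartialOrder B] :
    ∀ (n : ℕ) (p : LTSeries (A × B)), p.length = n →
      ∃ (q : LTSeries A) (r : LTSeries B),
        q.last = p.last.1 ∧ r.last = p.last.2 ∧ p.length ≤ q.length + r.length := by
  intro n
  induction n with
  | zero =>
      intro p hp
      exact ⟨RelSeries.singleton _ p.last.1, RelSeries.singleton _ p.last.2,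
        RelSeries.last_singleton _, RelSeries.last_singleton _, by omega⟩
  | succ n ih =>
      intro p hp
      obtain ⟨q, r, hq, hr, hlen⟩ := ih p.eraseLast (by simp [hp])
      have hstep : p.eraseLast.last < p.last :=
        p.eraseLast_last_rel_last (by omega)
      have hlen' : p.eraseLast.length = n := by simp [hp]
      have h1 : p.eraseLast.last.1 ≤ p.last.1 := hstep.le.1
      have h2 : p.eraseLast.last.2 ≤ p.last.2 := hstep.le.2
      rcases h1.lt_or_eq with h1 | h1 <;> rcases h2.lt_or_eq with h2 | h2
      · exact ⟨q.snoc p.last.1 (hq ▸ h1), r.snoc p.last.2 (hr ▸ h2),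
          RelSeries.last_snoc _ _ _, RelSeries.last_snoc _ _ _, by
            simp only [RelSeries.snoc_length]; omega⟩
      · exact ⟨q.snoc p.last.1 (hq ▸ h1), r, RelSeries.last_snoc _ _ _, hr.trans h2, by
          simp only [RelSeries.snoc_length]; omega⟩
      · exact ⟨q, r.snoc p.last.2 (hr ▸ h2), hq.trans h1, RelSeries.last_snoc _ _ _, by
          simp only [RelSeries.snoc_length]; omega⟩
      · exact absurd (Prod.ext h1 h2) hstep.ne

lemma ltSeries_prod_bound {A B : Type*} [PartialOrder A] [PartialOrder B]
    {kA kB : ℕ} (hA : ∀ q : LTSeries A, q.length ≤ kA) (hB : ∀ r : LTSeries B, r.length ≤ kB)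
    (p : LTSeries (A × B)) : p.length ≤ kA + kB := by
  obtain ⟨q, r, -, -, hlen⟩ := ltSeries_prod_exists p.length p rfl
  have := hA q
  have := hB r
  omega

variable {R : Type*} [CommRing R]

/-- Chains of submodules of a finite length module are bounded. -/
lemma ltSeries_bound_of_isFiniteLength {M : Type*} [AddCommGroup M] [Module R M]
    (h : IsFiniteLength R M) :
    ∃ k : ℕ, ∀ p : LTSeries (Submodule R M), p.length ≤ k := by
  induction h with
  | of_subsingleton =>
      refine ⟨0, fun p => ?_⟩
      by_contra hp
      push_neg at hp
      have := p.strictMono (show (⟨0, by omega⟩ : Fin (p.length + 1)) < ⟨1, by omega⟩ from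
        Fin.mk_lt_mk.mpr (by omega))
      exact this.ne (Subsingleton.elim _ _)
  | @of_simple_quotient M _ _ N _ _ ih =>
      obtain ⟨k, hk⟩ := ih
      refine ⟨k + 1, fun p => ?_⟩
      set f : Submodule R M → Submodule R N × Submodule R (M ⧸ N) :=
        fun S => (S.comap N.subtype, S.map N.mkQ) with hf
      have hfmono : StrictMono f := by
        intro S T hST
        refine lt_of_le_of_ne ⟨Submodule.comap_mono hST.le, Submodule.map_mono hST.le⟩ ?_
        intro heq
        have e1 : S.comap N.subtype = T.comap N.subtype := congrArg Prod.fst heq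
        have e2 : S.map N.mkQ = T.map N.mkQ := congrArg Prod.snd heq
        have e1' : N ⊓ S = N ⊓ T := by
          rw [← Submodule.map_comap_subtype N S, ← Submodule.map_comap_subtype N T, e1]
        have e2' : N ⊔ S = N ⊔ T := by
          rw [← Submodule.comap_map_mkQ, ← Submodule.comap_map_mkQ, e2]
        refine hST.ne (eq_of_le_of_inf_le_of_sup_le (z := N) hST.le ?_ ?_)
        · rw [inf_comm T N, ← e1', inf_comm]
        · rw [sup_comm T N, ← e2', sup_comm]
      have := ltSeries_prod_bound (kA := k) (kB := 1) hk
        (fun r => ltSeries_length_le_one_of_isSimpleOrder r) (p.map f hfmono)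
      simpa using this

lemma mLength_le_of_bound {M : Type*} [AddCommGroup M] [Module R M] {k : ℕ}
    (hk : ∀ p : LTSeries (Submodule R M), p.length ≤ k) :
    mLength R M ≤ ((k : ℕ∞) : WithBot ℕ∞) := by
  rw [mLength, Order.krullDim]
  exact iSup_le fun p => by exact_mod_cast hk p

lemma mLength_le_of_isFiniteLength {M : Type*} [AddCommGroup M] [Module R M]
    (h : IsFiniteLength R M) :
    ∃ k : ℕ, mLength R M ≤ ((k : ℕ∞) : WithBot ℕ∞) := by
  obtain ⟨k, hk⟩ := ltSeries_bound_of_isFiniteLength h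
  exact ⟨k, mLength_le_of_bound hk⟩

/-- `natLength` is monotone when the bigger length is finite. -/
lemma natLength_le_natLength {M N : Type*} [AddCommGroup M] [Module R M]
    [AddCommGroup N] [Module R N] (h : mLength R M ≤ mLength R N)
    {k : ℕ} (hk : mLength R N ≤ ((k : ℕ∞) : WithBot ℕ∞)) :
    natLength R M ≤ natLength R N := by
  unfold natLength
  rcases hM : mLength R M with _ | a
  · exact Nat.zero_le _
  · rcases hN : mLength R N with _ | b
    · rw [hM, hN] at h
      exact absurd h (WithBot.not_coe_le_bot a)
    · rw [hM, hN] at h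
      rw [hN] at hk
      have hab : a ≤ b := WithBot.coe_le_coe.mp h
      have hbk : b ≤ (k : ℕ∞) := WithBot.coe_le_coe.mp hk
      refine ENat.toNat_le_toNat hab ?_
      intro hb
      have hb' : b = ⊤ := hb
      rw [hb'] at hbk
      exact absurd hbk (by simp)

/-- Monotonicity of module length under ideal containment. -/
lemma mLength_quot_antitone {J K : Ideal R} (h : J ≤ K) :
    mLength R (R ⧸ K) ≤ mLength R (R ⧸ J) := by
  set f : (R ⧸ J) →ₗ[R] (R ⧸ K) :=
    Submodule.mapQ J K LinearMap.id h with hfdef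
  have hsurj : Function.Surjective f := by
    intro x
    obtain ⟨y, rfl⟩ := Submodule.Quotient.mk_surjective K x
    exact ⟨Submodule.Quotient.mk y, by rw [hfdef, Submodule.mapQ_apply]; rfl⟩
  have : StrictMono (fun W : Submodule R (R ⧸ K) => W.comap f) := by
    have hinj : Function.Injective (fun W : Submodule R (R ⧸ K) => W.comap f) :=
      Submodule.comap_injective_of_surjective hsurj
    intro S T hST
    exact lt_of_le_of_ne (Submodule.comap_mono hST.le) fun heq => hST.ne (hinj heq)
  exact Order.krullDim_le_of_strictMono _ this

/-- A module over `R ⧸ J` compatible with `R` is Artinian over `R` if it is over `R ⧸ J`. -/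
lemma isArtinian_of_quotient_tower (J : Ideal R) (M : Type*) [AddCommGroup M] [Module R M]
    [Module (R ⧸ J) M] [IsScalarTower R (R ⧸ J) M] [IsArtinian (R ⧸ J) M] : IsArtinian R M := by
  set g : Submodule R M → Submodule (R ⧸ J) M := fun S =>
    { carrier := S
      add_mem' := fun ha hb => S.add_mem ha hb
      zero_mem' := S.zero_mem
      smul_mem' := by
        intro c x hx
        obtain ⟨r, rfl⟩ := Ideal.Quotient.mk_surjective c
        have : (Ideal.Quotient.mk J r) • x = r • x := by
          rw [← Ideal.Quotient.algebraMap_eq]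
          exact algebraMap_smul _ r x
        rw [this]
        exact S.smul_mem r hx } with hg
  have hgs : StrictMono g := by
    intro S T hST
    refine lt_of_le_of_ne (fun x hx => hST.le hx) fun heq => hST.ne ?_
    ext x
    exact SetLike.ext_iff.mp heq x
  exact hgs.wellFoundedLT

variable [IsNoetherianRing R] [IsLocalRing R]

/-- A finite module over a noetherian local ring killed by the maximal ideal is Artinian. -/
lemma isArtinian_of_torsionBy_maximalIdeal (M : Type*) [AddCommGroup M] [Module R M]
    [Module.Finite R M]
    (hM : Module.IsTorsionBySet R M (IsLocalRing.maximalIdeal R : Set R)) :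
    IsArtinian R M := by
  letI : Module (R ⧸ IsLocalRing.maximalIdeal R) M := hM.module
  haveI : IsScalarTower R (R ⧸ IsLocalRing.maximalIdeal R) M := hM.isScalarTower
  haveI : Module.Finite (R ⧸ IsLocalRing.maximalIdeal R) M :=
    Module.Finite.of_restrictScalars_finite R _ M
  letI : Field (R ⧸ IsLocalRing.maximalIdeal R) := Ideal.Quotient.field _
  haveI : IsArtinian (R ⧸ IsLocalRing.maximalIdeal R) M := isArtinian_of_fg_of_artinian'
  exact isArtinian_of_quotient_tower (IsLocalRing.maximalIdeal R) M

/-- `R/𝔪^N` is an Artinian `R`-module. -/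
lemma isArtinian_quot_pow_maximalIdeal (N : ℕ) :
    IsArtinian R (R ⧸ (IsLocalRing.maximalIdeal R ^ N : Ideal R)) := by
  induction N with
  | zero =>
      haveI : Subsingleton (R ⧸ (IsLocalRing.maximalIdeal R ^ 0 : Ideal R)) := by
        refine ⟨fun a b => ?_⟩
        obtain ⟨x, rfl⟩ := Submodule.Quotient.mk_surjective _ a
        obtain ⟨y, rfl⟩ := Submodule.Quotient.mk_surjective _ b
        rw [Submodule.Quotient.eq]
        simp [pow_zero, Ideal.one_eq_top]
      infer_instance
  | succ N ih =>
      set 𝔪 := IsLocalRing.maximalIdeal R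
      set K : Submodule R (R ⧸ (𝔪 ^ (N + 1) : Ideal R)) :=
        Submodule.map (𝔪 ^ (N + 1) : Ideal R).mkQ (𝔪 ^ N : Ideal R) with hK
      haveI : Module.Finite R K := Module.Finite.iff_fg.mpr (IsNoetherian.noetherian K)
      haveI hart : IsArtinian R K := by
        refine isArtinian_of_torsionBy_maximalIdeal K ?_
        rintro ⟨x, hx⟩ ⟨r, hr⟩
        obtain ⟨y, hy, rfl⟩ := hx
        refine Subtype.ext ?_
        show r • Submodule.Quotient.mk y = 0
        rw [← Submodule.Quotient.mk_smul, Submodule.Quotient.mk_eq_zero]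
        have : y * r ∈ (𝔪 ^ N) * 𝔪 := Ideal.mul_mem_mul hy hr
        rw [← pow_succ 𝔪 N] at this
        simpa [smul_eq_mul, mul_comm] using this
      haveI : IsArtinian R (R ⧸ (𝔪 ^ N : Ideal R)) := ih
      have hle : (𝔪 ^ (N + 1) : Ideal R) ≤ (𝔪 ^ N : Ideal R) :=
        Ideal.pow_le_pow_right (Nat.le_succ N)
      set g : (R ⧸ (𝔪 ^ (N + 1) : Ideal R)) →ₗ[R] (R ⧸ (𝔪 ^ N : Ideal R)) :=
        Submodule.mapQ _ _ LinearMap.id hle with hgdef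
      refine isArtinian_of_range_eq_ker K.subtype g ?_
      rw [Submodule.range_subtype]
      ext x
      obtain ⟨y, rfl⟩ := Submodule.Quotient.mk_surjective _ x
      constructor
      · rintro ⟨z, hz, hzy⟩
        have : g (Submodule.Quotient.mk y) = 0 := by
          rw [← hzy]
          show g (Submodule.Quotient.mk z) = 0
          rw [hgdef, Submodule.mapQ_apply, LinearMap.id_apply, Submodule.Quotient.mk_eq_zero]
          exact hz
        simpa [LinearMap.mem_ker] using this
      · intro hx
        have : g (Submodule.Quotient.mk y) = 0 := hx
        rw [hgdef, Submodule.mapQ_apply, LinearMap.id_apply,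
          Submodule.Quotient.mk_eq_zero] at this
        exact ⟨y, this, rfl⟩

/-- `R/J` is Artinian for any `J` containing a power of the maximal ideal. -/
lemma isArtinian_quot_of_pow_le {J : Ideal R} {N : ℕ}
    (h : (IsLocalRing.maximalIdeal R ^ N : Ideal R) ≤ J) : IsArtinian R (R ⧸ J) := by
  haveI := isArtinian_quot_pow_maximalIdeal (R := R) N
  set f : (R ⧸ (IsLocalRing.maximalIdeal R ^ N : Ideal R)) →ₗ[R] (R ⧸ J) :=
    Submodule.mapQ _ _ LinearMap.id h with hfdef
  refine isArtinian_of_surjective _ f ?_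
  intro x
  obtain ⟨y, rfl⟩ := Submodule.Quotient.mk_surjective J x
  exact ⟨Submodule.Quotient.mk y, by rw [hfdef, Submodule.mapQ_apply]; rfl⟩

/-- Quotients by powers of an `𝔪`-primary ideal have finite length. -/
lemma mLength_quot_pow_le {I : Ideal R} (hI : I.radical = IsLocalRing.maximalIdeal R) (m : ℕ) :
    ∃ k : ℕ, mLength R (R ⧸ (I ^ m : Ideal R)) ≤ ((k : ℕ∞) : WithBot ℕ∞) := by
  obtain ⟨c, hc⟩ := Ideal.exists_radical_pow_le_of_fg I (IsNoetherian.noetherian _)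
  rw [hI] at hc
  have hle : (IsLocalRing.maximalIdeal R ^ (c * m) : Ideal R) ≤ I ^ m := by
    rw [pow_mul]
    exact Ideal.pow_right_mono hc m
  haveI := isArtinian_quot_of_pow_le hle
  exact mLength_le_of_isFiniteLength (isFiniteLength_iff_isNoetherian_isArtinian.mpr
    ⟨inferInstance, inferInstance⟩)

end Aux

/-- Let `(R,𝔪)` be a noetherian local ring of dimension `d ≥ 2` and `I` an
`𝔪`-primary ideal.  If `I^{q+1} ⊆ (I^{[q]})^*` for infinitely many `q = pⁿ`,
then `e(I,R)/d! ≥ e_HK(I,R)`; in particular, for those `q` the containment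
forces `l(R/I^{q+1}) ≥ l(R/(I^{[q]})^*)`. -/
theorem multiplicity_div_factorial_ge_hilbertKunz {R : Type*} [CommRing R]
    [IsNoetherianRing R] [IsLocalRing R] (p : ℕ) [Fact p.Prime] [CharP R p]
    (d : ℕ) (hd : ringKrullDim R = d) (hd2 : 2 ≤ d)
    (I : Ideal R) (hI : I.radical = IsLocalRing.maximalIdeal R)
    (e eHK : ℝ)
    (he : Tendsto (fun n : ℕ =>
        (d.factorial : ℝ) * ((natLength R (R ⧸ I ^ n)) : ℝ) / (n : ℝ) ^ d)
      atTop (nhds e))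
    (heHK : Tendsto (fun n => ((natLength R (R ⧸ frobPow I (p ^ n))) : ℝ) / (p : ℝ) ^ (n * d))
      atTop (nhds eHK))
    (heHKstar : Tendsto (fun n =>
        ((natLength R (R ⧸ tightClosure p (frobPow I (p ^ n)))) : ℝ) / (p : ℝ) ^ (n * d))
      atTop (nhds eHK))
    (hinf : {n : ℕ | I ^ (p ^ n + 1) ≤ tightClosure p (frobPow I (p ^ n))}.Infinite) :
    e / (d.factorial : ℝ) ≥ eHK ∧
      ∀ n, I ^ (p ^ n + 1) ≤ tightClosure p (frobPow I (p ^ n)) →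
        natLength R (R ⧸ tightClosure p (frobPow I (p ^ n))) ≤
          natLength R (R ⧸ I ^ (p ^ n + 1)) := by
  -- Part 2 : monotonicity of lengths
  have part2 : ∀ n, I ^ (p ^ n + 1) ≤ tightClosure p (frobPow I (p ^ n)) →
      natLength R (R ⧸ tightClosure p (frobPow I (p ^ n))) ≤
        natLength R (R ⧸ I ^ (p ^ n + 1)) := by
    intro n hn
    obtain ⟨k, hk⟩ := mLength_quot_pow_le hI (p ^ n + 1)
    exact natLength_le_natLength (mLength_quot_antitone hn) hk
  refine ⟨?_, part2⟩
  -- Part 1 : the limit comparison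
  have hp1 : (1 : ℝ) < (p : ℝ) := by
    exact_mod_cast (Fact.out : p.Prime).one_lt
  have hppos : ∀ n : ℕ, (0 : ℝ) < (p : ℝ) ^ n := fun n => pow_pos (by linarith) n
  set S : Set ℕ := {n : ℕ | I ^ (p ^ n + 1) ≤ tightClosure p (frobPow I (p ^ n))} with hS
  set F : Filter ℕ := atTop ⊓ Filter.principal S with hF
  haveI hne : F.NeBot := by
    rw [hF]
    exact Filter.frequently_iff_neBot.mp (Nat.frequently_atTop_iff_infinite.mpr hinf)
  -- the tight-closure sequence tends to eHK along F
  have hA : Tendsto (fun n =>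
      ((natLength R (R ⧸ tightClosure p (frobPow I (p ^ n)))) : ℝ) / (p : ℝ) ^ (n * d))
      F (nhds eHK) := heHKstar.mono_left inf_le_left
  -- the power sequence tends to e / d! along F
  have hq : Tendsto (fun n : ℕ => p ^ n + 1) atTop atTop :=
    tendsto_atTop_mono (fun n => Nat.le_succ _)
      (tendsto_pow_atTop_atTop_of_one_lt (Fact.out : p.Prime).one_lt)
  have hT1 : Tendsto (fun n : ℕ =>
      (d.factorial : ℝ) * ((natLength R (R ⧸ I ^ (p ^ n + 1))) : ℝ) / ((p ^ n + 1 : ℕ) : ℝ) ^ d)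
      atTop (nhds e) := he.comp hq
  have hT2 : Tendsto (fun n : ℕ => (((p ^ n + 1 : ℕ) : ℝ) / ((p : ℝ) ^ n)) ^ d)
      atTop (nhds 1) := by
    have hbase : Tendsto (fun n : ℕ => ((p ^ n + 1 : ℕ) : ℝ) / ((p : ℝ) ^ n))
        atTop (nhds 1) := by
      have h1 : Tendsto (fun n : ℕ => ((p : ℝ) ^ n)⁻¹) atTop (nhds 0) :=
        tendsto_inv_atTop_zero.comp (tendsto_pow_atTop_atTop_of_one_lt hp1)
      have : Tendsto (fun n : ℕ => 1 + ((p : ℝ) ^ n)⁻¹) atTop (nhds (1 + 0)) :=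
        tendsto_const_nhds.add h1
      rw [add_zero] at this
      refine this.congr fun n => ?_
      push_cast
      field_simp
    have := hbase.pow d
    simpa using this
  have hG : Tendsto (fun n : ℕ =>
      ((natLength R (R ⧸ I ^ (p ^ n + 1))) : ℝ) / ((p : ℝ) ^ n) ^ d)
      atTop (nhds (e / (d.factorial : ℝ))) := by
    have hcomb := (hT1.mul hT2).div_const (d.factorial : ℝ)
    rw [mul_one] at hcomb
    refine hcomb.congr fun n => ?_
    have hfac : (d.factorial : ℝ) ≠ 0 := Nat.cast_ne_zero.mpr d.factorial_ne_zero
    have hq0 : ((p ^ n + 1 : ℕ) : ℝ) ≠ 0 := by positivity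
    have hp0 : ((p : ℝ) ^ n) ≠ 0 := (hppos n).ne'
    field_simp
    rw [mul_assoc, ← mul_pow, div_mul_cancel₀ _ hp0]
  have hGF : Tendsto (fun n : ℕ =>
      ((natLength R (R ⧸ I ^ (p ^ n + 1))) : ℝ) / ((p : ℝ) ^ n) ^ d)
      F (nhds (e / (d.factorial : ℝ))) := hG.mono_left inf_le_left
  -- eventual inequality along F
  have hineq : ∀ᶠ n in F, ((natLength R (R ⧸ tightClosure p (frobPow I (p ^ n)))) : ℝ) /
      (p : ℝ) ^ (n * d) ≤
      ((natLength R (R ⧸ I ^ (p ^ n + 1))) : ℝ) / ((p : ℝ) ^ n) ^ d := by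
    have hSmem : ∀ᶠ n in F, n ∈ S :=
      (Filter.eventually_inf_principal).mpr (Filter.Eventually.of_forall fun n hn => hn)
    refine hSmem.mono fun n hn => ?_
    have h1 : (p : ℝ) ^ (n * d) = ((p : ℝ) ^ n) ^ d := by rw [pow_mul]
    rw [h1]
    have hnum : ((natLength R (R ⧸ tightClosure p (frobPow I (p ^ n)))) : ℝ) ≤
        ((natLength R (R ⧸ I ^ (p ^ n + 1))) : ℝ) := by
      exact_mod_cast part2 n hn
    gcongr
  exact le_of_tendsto_of_tendsto hA hGF hineq
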